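/- Let q be a primitive m-th root of unity in K and let α, β, λ₁, λ₂ ∈ K be nonzero. On the K-vector space N₁ with basis {e(a,b) : 0 ≤ a ≤ m−1, 0 ≤ b ≤ m−1} the formulas e(a,b)·Z11 = q^b·e(a+1,b) for a < m−1 and q^b·α·e(0,b) for a = m−1; e(a,b)·Z12 = q^{b−a}·λ₂·e(a,b−1) for b > 0 and β^{−1}·λ₂·q^{−a}·e(a,m−1) for b = 0; e(a,b)·Z21 = e(a,b+1) for b < m−1 and β·e(a,0) for b = m−1; e(a,b)·Z22 = (λ₁ + q·λ₂ − q·(1−q^{−a})·λ₂)·e(a−1,b) for a > 0 and α^{−1}·(λ₁ + q·λ₂)·e(m−1,b) for a = 0, define a right Mat₂(q)-module structure on N₁, and this module is simple of K-dimension m². -/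

import Mathlib

noncomputable section

open FreeAlgebra MulOpposite

/-- The relations of the Dipper–Donkin quantized matrix algebra of rank 2:
`Z12·Z11 = Z11·Z12`, `Z21·Z11 = q·Z11·Z21`, `Z22·Z21 = Z21·Z22`, `Z22·Z12 = q·Z12·Z22`,
`Z21·Z12 = q·Z12·Z21`, `Z22·Z11 = Z11·Z22 + (q−1)·Z12·Z21`, where the generators
`Z11, Z12, Z21, Z22` are the images of `0, 1, 2, 3 : Fin 4`. -/
inductive DDrel {K : Type*} [Field K] (q : K) :
    FreeAlgebra K (Fin 4) → FreeAlgebra K (Fin 4) → Prop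
  | r1 : DDrel q (ι K (1 : Fin 4) * ι K (0 : Fin 4)) (ι K (0 : Fin 4) * ι K (1 : Fin 4))
  | r2 : DDrel q (ι K (2 : Fin 4) * ι K (0 : Fin 4)) (q • (ι K (0 : Fin 4) * ι K (2 : Fin 4)))
  | r3 : DDrel q (ι K (3 : Fin 4) * ι K (2 : Fin 4)) (ι K (2 : Fin 4) * ι K (3 : Fin 4))
  | r4 : DDrel q (ι K (3 : Fin 4) * ι K (1 : Fin 4)) (q • (ι K (1 : Fin 4) * ι K (3 : Fin 4)))
  | r5 : DDrel q (ι K (2 : Fin 4) * ι K (1 : Fin 4)) (q • (ι K (1 : Fin 4) * ι K (2 : Fin 4)))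
  | r6 : DDrel q (ι K (3 : Fin 4) * ι K (0 : Fin 4))
      (ι K (0 : Fin 4) * ι K (3 : Fin 4) + (q - 1) • (ι K (1 : Fin 4) * ι K (2 : Fin 4)))

/-- The Dipper–Donkin quantized matrix algebra `Mat₂(q)`: the quotient of the free
`K`-algebra on four generators by the two-sided ideal generated by the relations above. -/
abbrev DDMat2 {K : Type*} [Field K] (q : K) := RingQuot (DDrel q)

variable {K : Type*} [Field K]

/-- The generator `Z11` of `Mat₂(q)`. -/
def Z11 (q : K) : DDMat2 q := RingQuot.mkAlgHom K (DDrel q) (ι K (0 : Fin 4))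
/-- The generator `Z12` of `Mat₂(q)`. -/
def Z12 (q : K) : DDMat2 q := RingQuot.mkAlgHom K (DDrel q) (ι K (1 : Fin 4))
/-- The generator `Z21` of `Mat₂(q)`. -/
def Z21 (q : K) : DDMat2 q := RingQuot.mkAlgHom K (DDrel q) (ι K (2 : Fin 4))
/-- The generator `Z22` of `Mat₂(q)`. -/
def Z22 (q : K) : DDMat2 q := RingQuot.mkAlgHom K (DDrel q) (ι K (3 : Fin 4))

variable (q : K)

/-- The action of `Z11` on the module `N₁`, written in coordinates with respect to the
basis `e(a,b)`, `a b : Fin m`:  `e(a,b)·Z11 = q^b·e(a+1,b)` for `a < m−1` and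
`q^b·α·e(0,b)` for `a = m−1` (addition in `Fin m` is cyclic). -/
def T11 (α : K) (m : ℕ) [NeZero m] :
    ((Fin m × Fin m) → K) →ₗ[K] ((Fin m × Fin m) → K) where
  toFun v p := (if (p.1 : ℕ) = 0 then α else 1) * q ^ (p.2 : ℕ) * v (p.1 - 1, p.2)
  map_add' x y := by funext p; simp [mul_add]
  map_smul' c x := by funext p; simp [smul_eq_mul]; ring

/-- The action of `Z12` on the module `N₁` in coordinates:
`e(a,b)·Z12 = q^{b−a}·λ₂·e(a,b−1)` for `b > 0` and `β⁻¹·λ₂·q^{−a}·e(a,m−1)` for `b = 0`. -/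
def T12 (β lb : K) (m : ℕ) [NeZero m] :
    ((Fin m × Fin m) → K) →ₗ[K] ((Fin m × Fin m) → K) where
  toFun v p := (if (p.2 : ℕ) = m - 1 then β⁻¹ * lb * q⁻¹ ^ (p.1 : ℕ)
      else lb * q ^ ((p.2 : ℕ) + 1) * q⁻¹ ^ (p.1 : ℕ)) * v (p.1, p.2 + 1)
  map_add' x y := by funext p; simp [mul_add]
  map_smul' c x := by funext p; simp [smul_eq_mul]; ring

/-- The action of `Z21` on the module `N₁` in coordinates:
`e(a,b)·Z21 = e(a,b+1)` for `b < m−1` and `β·e(a,0)` for `b = m−1`. -/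
def T21 (β : K) (m : ℕ) [NeZero m] :
    ((Fin m × Fin m) → K) →ₗ[K] ((Fin m × Fin m) → K) where
  toFun v p := (if (p.2 : ℕ) = 0 then β else 1) * v (p.1, p.2 - 1)
  map_add' x y := by funext p; simp [mul_add]
  map_smul' c x := by funext p; simp [smul_eq_mul]; ring

/-- The action of `Z22` on the module `N₁` in coordinates:
`e(a,b)·Z22 = (λ₁ + q·λ₂ − q·(1−q^{−a})·λ₂)·e(a−1,b)` for `a > 0` and
`α⁻¹·(λ₁ + q·λ₂)·e(m−1,b)` for `a = 0`. -/
def T22 (α la lb : K) (m : ℕ) [NeZero m] :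
    ((Fin m × Fin m) → K) →ₗ[K] ((Fin m × Fin m) → K) where
  toFun v p := (if (p.1 : ℕ) = m - 1 then α⁻¹ * (la + q * lb)
      else la + q * lb - q * (1 - q⁻¹ ^ ((p.1 : ℕ) + 1)) * lb) * v (p.1 + 1, p.2)
  map_add' x y := by funext p; simp [mul_add]
  map_smul' c x := by funext p; simp [smul_eq_mul]; ring

/-!
Each generator acts on `K^(Fin m × Fin m)` as a weighted cyclic shift `v ↦ (p ↦ w p * v (p + s))`,
and a product of weighted shifts is again one, so each defining relation of `Mat₂(q)` reduces to an
identity between weights. Once every weight is written as a boundary factor (`α^{±1}` or `β^{±1}`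
on one row or column, `1` elsewhere) times an expression in `q ^ a` and `q ^ b`, these identities
follow from `q ^ m = 1`: the boundary factors either agree on both sides or cancel.

The module is simple because `T12 * T21` and `T22 * T11` are diagonal with weights `λ₂ q^{b+1-a}`
and `q^b (λ₁ + λ₂ q^{-a})`, which separate the basis vectors when `q` is primitive and
`λ₁, λ₂ ≠ 0`. Hence a nonzero invariant subspace contains some `e(a,b)`, and `T11`, `T21` carry it
to every other basis vector.
-/

section WeightedShift

variable {R ι : Type*} [CommSemiring R]

def weightedShift [Add ι] (w : ι → R) (s : ι) : Module.End R (ι → R) where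
  toFun v p := w p * v (p + s)
  map_add' v v' := by funext p; simp [mul_add]
  map_smul' c v := by funext p; simp [mul_left_comm]

@[simp]
theorem weightedShift_apply [Add ι] (w : ι → R) (s : ι) (v : ι → R) (p : ι) :
    weightedShift w s v p = w p * v (p + s) := rfl

theorem weightedShift_mul [AddSemigroup ι] (w w' : ι → R) (s s' : ι) :
    weightedShift w s * weightedShift w' s' =
      weightedShift (fun p => w p * w' (p + s)) (s + s') := by
  ext v p
  simp [mul_assoc, add_assoc]

theorem smul_weightedShift [Add ι] (c : R) (w : ι → R) (s : ι) :
    c • weightedShift w s = weightedShift (c • w) s := by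
  ext v p
  simp [mul_assoc]

theorem weightedShift_add [Add ι] (w w' : ι → R) (s : ι) :
    weightedShift w s + weightedShift w' s = weightedShift (w + w') s := by
  ext v p
  simp [add_mul]

theorem weightedShift_single [AddGroup ι] [DecidableEq ι] (w : ι → R) (s p : ι) (c : R) :
    weightedShift w s (Pi.single p c) = Pi.single (p - s) (w (p - s) * c) := by
  funext x
  by_cases hx : x = p - s
  · subst hx; simp
  · simp [hx, ← eq_sub_iff_add_eq]

theorem weightedShift_zero_apply [AddZeroClass ι] (w v : ι → R) :
    weightedShift w 0 v = w * v := by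
  funext p
  simp

end WeightedShift

section RootOfUnity

variable {M : Type*} {m : ℕ}

theorem pow_finVal_add [Monoid M] {x : M} (hx : x ^ m = 1) (a b : Fin m) :
    x ^ ((a + b : Fin m) : ℕ) = x ^ (a : ℕ) * x ^ (b : ℕ) := by
  rw [Fin.val_add, ← pow_eq_pow_mod _ hx, pow_add]

theorem pow_finVal_one [Monoid M] [NeZero m] {x : M} (hx : x ^ m = 1) :
    x ^ ((1 : Fin m) : ℕ) = x := by
  rw [Fin.val_one', ← pow_eq_pow_mod _ hx, pow_one]

theorem pow_finVal_neg_one [DivisionMonoid M] [NeZero m] {x : M} (hx : x ^ m = 1) :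
    x ^ ((-1 : Fin m) : ℕ) = x⁻¹ := by
  have h := pow_finVal_add hx (-1) 1
  rw [neg_add_cancel, Fin.val_zero, pow_zero, pow_finVal_one hx] at h
  exact eq_inv_of_mul_eq_one_left h.symm

theorem IsPrimitiveRoot.pow_finVal_injective [CommMonoid M] {x : M} (hx : IsPrimitiveRoot x m) :
    Function.Injective fun a : Fin m => x ^ (a : ℕ) :=
  fun a b h => Fin.ext (hx.pow_inj a.isLt b.isLt h)

end RootOfUnity

theorem Fin.val_eq_sub_one_iff {m : ℕ} [NeZero m] {a : Fin m} : (a : ℕ) = m - 1 ↔ a = -1 := by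
  obtain ⟨n, rfl⟩ := Nat.exists_eq_succ_of_ne_zero (NeZero.ne m)
  simp [Fin.ext_iff, Fin.coe_neg_one]

theorem Submodule.single_mem_of_weightedShift_mem {ι : Type*} [AddGroup ι] [DecidableEq ι]
    {W : Submodule K (ι → K)} {w : ι → K} {s p : ι} (hW : ∀ v ∈ W, weightedShift w s v ∈ W)
    (hw : w (p - s) ≠ 0) (hp : Pi.single p 1 ∈ W) : Pi.single (p - s) 1 ∈ W := by
  have h := W.smul_mem (w (p - s))⁻¹ (hW _ hp)
  rwa [weightedShift_single, ← Pi.single_smul, smul_eq_mul, mul_one, inv_mul_cancel₀ hw] at h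

theorem Submodule.exists_single_mem_of_mul_mem {ι : Type*} [Fintype ι] [DecidableEq ι]
    {W : Submodule K (ι → K)} {F : Set (ι → K)} (hW : W ≠ ⊥)
    (hF : ∀ f ∈ F, ∀ v ∈ W, f * v ∈ W) (hsep : ∀ p p', p ≠ p' → ∃ f ∈ F, f p ≠ f p') :
    ∃ p, Pi.single p 1 ∈ W := by
  obtain ⟨v, hvW, hv⟩ := W.ne_bot_iff.1 hW
  obtain ⟨p₀, hp₀⟩ := Function.ne_iff.1 hv
  choose f hfF hf using fun p : {p // p ≠ p₀} => hsep p p₀ p.2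
  have hmem : ∀ S : Finset {p // p ≠ p₀}, (fun x => (∏ p ∈ S, (f p x - f p p)) * v x) ∈ W := by
    intro S
    induction S using Finset.induction_on with
    | empty => simpa using hvW
    | insert p S hp ih =>
      have hstep : (fun x => (∏ p' ∈ insert p S, (f p' x - f p' p')) * v x) =
          f p * (fun x => (∏ p' ∈ S, (f p' x - f p' p')) * v x) -
            f p p • (fun x => (∏ p' ∈ S, (f p' x - f p' p')) * v x) := by
        funext x
        simp only [Finset.prod_insert hp, Pi.sub_apply, Pi.mul_apply, Pi.smul_apply, smul_eq_mul]
        ring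
      rw [hstep]
      exact W.sub_mem (hF _ (hfF p) _ ih) (W.smul_mem _ ih)
  set g : ι → K := fun x => ∏ p, (f p x - f p p)
  have hg : (fun x => g x * v x) = Pi.single p₀ (g p₀ * v p₀) := by
    funext x
    by_cases hx : x = p₀
    · subst hx; simp
    · rw [Pi.single_eq_of_ne hx]
      exact mul_eq_zero_of_left (Finset.prod_eq_zero (Finset.mem_univ ⟨x, hx⟩) (sub_self _)) _
  have hg₀ : g p₀ * v p₀ ≠ 0 :=
    mul_ne_zero (Finset.prod_ne_zero_iff.2 fun p _ => sub_ne_zero.2 (hf p).symm) hp₀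
  refine ⟨p₀, ?_⟩
  have h := W.smul_mem (g p₀ * v p₀)⁻¹ (hmem Finset.univ)
  rwa [hg, ← Pi.single_smul, smul_eq_mul, inv_mul_cancel₀ hg₀] at h

theorem Set.eq_univ_of_forall_add_mem {G : Type*} [AddGroup G] {S T : Set G}
    (hT : AddSubmonoid.closure T = ⊤) (hS : S.Nonempty) (h : ∀ p ∈ S, ∀ t ∈ T, p + t ∈ S) :
    S = Set.univ := by
  let M : AddSubmonoid G :=
    { carrier := {t | ∀ p ∈ S, p + t ∈ S}
      zero_mem' := by simp
      add_mem' := fun ha hb p hp => by rw [← add_assoc]; exact hb _ (ha p hp) }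
  have hM : M = ⊤ := top_le_iff.1 (hT ▸ AddSubmonoid.closure_le.2 fun t ht p hp => h p hp t ht)
  obtain ⟨p₀, hp₀⟩ := hS
  refine Set.eq_univ_of_forall fun x => ?_
  have hx : -p₀ + x ∈ M := hM ▸ AddSubmonoid.mem_top _
  simpa using hx p₀ hp₀

open Fin.NatCast Fin.CommRing in
theorem Fin.addSubmonoidClosure_prod_eq_top (m : ℕ) [NeZero m] :
    AddSubmonoid.closure {((1 : Fin m), (0 : Fin m)), (0, 1)} = ⊤ := by
  refine eq_top_iff.2 fun ⟨a, b⟩ _ => ?_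
  have hab : (a, b) = (a : ℕ) • ((1 : Fin m), (0 : Fin m)) + (b : ℕ) • ((0 : Fin m), (1 : Fin m)) :=
    by simp [Fin.cast_val_eq_self]
  rw [hab]
  exact add_mem (nsmul_mem (AddSubmonoid.subset_closure (by simp)) _)
    (nsmul_mem (AddSubmonoid.subset_closure (by simp)) _)

theorem DDMat2.exists_algHom {A : Type*} [Semiring A] [Algebra K A] (x11 x12 x21 x22 : A)
    (h1 : x12 * x11 = x11 * x12) (h2 : x21 * x11 = q • (x11 * x21))
    (h3 : x22 * x21 = x21 * x22) (h4 : x22 * x12 = q • (x12 * x22))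
    (h5 : x21 * x12 = q • (x12 * x21))
    (h6 : x22 * x11 = x11 * x22 + (q - 1) • (x12 * x21)) :
    ∃ ρ : DDMat2 q →ₐ[K] A,
      ρ (Z11 q) = x11 ∧ ρ (Z12 q) = x12 ∧ ρ (Z21 q) = x21 ∧ ρ (Z22 q) = x22 := by
  let g : Fin 4 → A := ![x11, x12, x21, x22]
  have hrel : ∀ ⦃x y⦄, DDrel q x y → lift K g x = lift K g y := by
    intro x y h
    cases h <;> simpa [g]
  exact ⟨RingQuot.liftAlgHom K ⟨lift K g, hrel⟩, by simp [Z11, g], by simp [Z12, g],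
    by simp [Z21, g], by simp [Z22, g]⟩

theorem eq_of_diagonal_weights_eq {m : ℕ} (hq : IsPrimitiveRoot q m) {la lb : K} (hla : la ≠ 0)
    (hlb : lb ≠ 0) {a b a' b' : Fin m}
    (h₁ : lb * q * q ^ (b : ℕ) / q ^ (a : ℕ) = lb * q * q ^ (b' : ℕ) / q ^ (a' : ℕ))
    (h₂ : q ^ (b : ℕ) * (la + lb / q ^ (a : ℕ)) = q ^ (b' : ℕ) * (la + lb / q ^ (a' : ℕ))) :
    (a, b) = (a', b') := by
  have hq₀ : q ≠ 0 := hq.ne_zero (Fin.pos a).ne'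
  have hr : q ^ (b : ℕ) / q ^ (a : ℕ) = q ^ (b' : ℕ) / q ^ (a' : ℕ) :=
    mul_left_cancel₀ (mul_ne_zero hlb hq₀) (by simpa only [mul_div_assoc] using h₁)
  have hb : q ^ (b : ℕ) = q ^ (b' : ℕ) :=
    mul_right_cancel₀ hla (by linear_combination h₂ - lb * hr)
  obtain rfl := hq.pow_finVal_injective hb
  rw [div_eq_mul_inv, div_eq_mul_inv, mul_right_inj' (pow_ne_zero _ hq₀), inv_inj] at hr
  rw [hq.pow_finVal_injective hr]

section N1

variable {m : ℕ} [NeZero m]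

theorem T11_eq_weightedShift (α : K) :
    T11 q α m = weightedShift (fun p : Fin m × Fin m =>
      (if p.1 = 0 then α else 1) * q ^ (p.2 : ℕ)) (-1, 0) := by
  refine LinearMap.ext fun v => funext fun ⟨a, b⟩ => ?_
  simp [T11, Fin.val_eq_zero_iff, sub_eq_add_neg]

-- At `b = -1` the factor `q * q ^ b` is `q ^ m = 1`, which recovers the boundary case of `T12`.
theorem T12_eq_weightedShift (hq : q ^ m = 1) (β lb : K) :
    T12 q β lb m = weightedShift (fun p : Fin m × Fin m =>
      (if p.2 = -1 then β⁻¹ else 1) * lb * q * q ^ (p.2 : ℕ) / q ^ (p.1 : ℕ)) (0, 1) := by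
  have hq0 : q ≠ 0 := (IsUnit.of_pow_eq_one hq (NeZero.ne m)).ne_zero
  refine LinearMap.ext fun v => funext fun ⟨a, b⟩ => ?_
  simp only [T12, weightedShift_apply, LinearMap.coe_mk, AddHom.coe_mk, Fin.val_eq_sub_one_iff,
    Prod.mk_add_mk, add_zero, inv_pow]
  split_ifs with hb
  · rw [hb, pow_finVal_neg_one hq]
    field_simp
  · ring

theorem T21_eq_weightedShift (β : K) :
    T21 β m = weightedShift (fun p : Fin m × Fin m => if p.2 = 0 then β else 1) (0, -1) := by
  refine LinearMap.ext fun v => funext fun ⟨a, b⟩ => ?_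
  simp [T21, Fin.val_eq_zero_iff, sub_eq_add_neg]

-- The defining weight `λ₁ + qλ₂ - q(1 - q^{-(a+1)})λ₂` simplifies to `λ₁ + λ₂ q^{-a}`, and at
-- `a = -1` this is `λ₁ + qλ₂` because `q ^ (m - 1) = q⁻¹`.
theorem T22_eq_weightedShift (hq : q ^ m = 1) (α la lb : K) :
    T22 q α la lb m = weightedShift (fun p : Fin m × Fin m =>
      (if p.1 = -1 then α⁻¹ else 1) * (la + lb / q ^ (p.1 : ℕ))) (1, 0) := by
  have hq0 : q ≠ 0 := (IsUnit.of_pow_eq_one hq (NeZero.ne m)).ne_zero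
  refine LinearMap.ext fun v => funext fun ⟨a, b⟩ => ?_
  simp only [T22, weightedShift_apply, LinearMap.coe_mk, AddHom.coe_mk, Fin.val_eq_sub_one_iff,
    Prod.mk_add_mk, add_zero, inv_pow]
  split_ifs with ha
  · rw [ha, pow_finVal_neg_one hq]
    field_simp
  · rw [pow_succ]
    field_simp
    ring

theorem T12_mul_T21_eq_weightedShift (hq : q ^ m = 1) (β lb : K) (hβ : β ≠ 0) :
    T12 q β lb m * T21 β m =
      weightedShift (fun p : Fin m × Fin m => lb * q * q ^ (p.2 : ℕ) / q ^ (p.1 : ℕ)) 0 := by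
  rw [T12_eq_weightedShift q hq, T21_eq_weightedShift, weightedShift_mul]
  congr 1
  · funext ⟨a, b⟩
    simp only [Prod.mk_add_mk, add_zero, add_eq_zero_iff_eq_neg]
    split_ifs <;> field_simp
  · simp

theorem T21_mul_T12_eq_weightedShift (hq : q ^ m = 1) (β lb : K) (hβ : β ≠ 0) :
    T21 β m * T12 q β lb m =
      weightedShift (fun p : Fin m × Fin m => lb * q ^ (p.2 : ℕ) / q ^ (p.1 : ℕ)) 0 := by
  have hq0 : q ≠ 0 := (IsUnit.of_pow_eq_one hq (NeZero.ne m)).ne_zero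
  rw [T12_eq_weightedShift q hq, T21_eq_weightedShift, weightedShift_mul]
  congr 1
  · funext ⟨a, b⟩
    simp only [Prod.mk_add_mk, add_zero, add_eq_right, pow_finVal_add hq, pow_finVal_neg_one hq]
    split_ifs <;> field_simp
  · simp

theorem T22_mul_T11_eq_weightedShift (hq : q ^ m = 1) (α la lb : K) (hα : α ≠ 0) :
    T22 q α la lb m * T11 q α m =
      weightedShift (fun p : Fin m × Fin m => q ^ (p.2 : ℕ) * (la + lb / q ^ (p.1 : ℕ))) 0 := by
  rw [T22_eq_weightedShift q hq, T11_eq_weightedShift, weightedShift_mul]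
  congr 1
  · funext ⟨a, b⟩
    simp only [Prod.mk_add_mk, add_zero, add_eq_zero_iff_eq_neg]
    split_ifs <;> field_simp
  · simp

theorem T11_mul_T22_eq_weightedShift (hq : q ^ m = 1) (α la lb : K) (hα : α ≠ 0) :
    T11 q α m * T22 q α la lb m =
      weightedShift (fun p : Fin m × Fin m => q ^ (p.2 : ℕ) * (la + lb * q / q ^ (p.1 : ℕ))) 0 := by
  have hq0 : q ≠ 0 := (IsUnit.of_pow_eq_one hq (NeZero.ne m)).ne_zero
  rw [T22_eq_weightedShift q hq, T11_eq_weightedShift, weightedShift_mul]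
  congr 1
  · funext ⟨a, b⟩
    simp only [Prod.mk_add_mk, add_zero, add_eq_right, pow_finVal_add hq, pow_finVal_neg_one hq]
    split_ifs <;> field_simp
  · simp

theorem commute_T11_T12 (hq : q ^ m = 1) (α β lb : K) :
    Commute (T11 q α m) (T12 q β lb m) := by
  have hq0 : q ≠ 0 := (IsUnit.of_pow_eq_one hq (NeZero.ne m)).ne_zero
  rw [Commute, SemiconjBy, T11_eq_weightedShift, T12_eq_weightedShift q hq, weightedShift_mul,
    weightedShift_mul, add_comm]
  congr 1
  funext ⟨a, b⟩
  simp only [Prod.mk_add_mk, add_zero, pow_finVal_add hq, pow_finVal_one hq, pow_finVal_neg_one hq]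
  split_ifs <;> field_simp

theorem T11_mul_T21 (hq : q ^ m = 1) (α β : K) :
    T11 q α m * T21 β m = q • (T21 β m * T11 q α m) := by
  have hq0 : q ≠ 0 := (IsUnit.of_pow_eq_one hq (NeZero.ne m)).ne_zero
  rw [T11_eq_weightedShift, T21_eq_weightedShift, weightedShift_mul,
    weightedShift_mul, smul_weightedShift, add_comm]
  congr 1
  funext ⟨a, b⟩
  simp only [Prod.mk_add_mk, add_zero, pow_finVal_add hq, pow_finVal_neg_one hq,
    Pi.smul_apply, smul_eq_mul]
  split_ifs <;> field_simp

theorem commute_T21_T22 (hq : q ^ m = 1) (α β la lb : K) :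
    Commute (T21 β m) (T22 q α la lb m) := by
  rw [Commute, SemiconjBy, T21_eq_weightedShift, T22_eq_weightedShift q hq, weightedShift_mul,
    weightedShift_mul, add_comm]
  congr 1
  funext ⟨a, b⟩
  simp only [Prod.mk_add_mk, add_zero]
  split_ifs <;> ring

theorem T12_mul_T22 (hq : q ^ m = 1) (α β la lb : K) :
    T12 q β lb m * T22 q α la lb m = q • (T22 q α la lb m * T12 q β lb m) := by
  have hq0 : q ≠ 0 := (IsUnit.of_pow_eq_one hq (NeZero.ne m)).ne_zero
  rw [T12_eq_weightedShift q hq, T22_eq_weightedShift q hq, weightedShift_mul,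
    weightedShift_mul, smul_weightedShift, add_comm]
  congr 1
  funext ⟨a, b⟩
  simp only [Prod.mk_add_mk, add_zero, pow_finVal_add hq, pow_finVal_one hq,
    Pi.smul_apply, smul_eq_mul]
  split_ifs <;> field_simp

theorem T12_mul_T21 (hq : q ^ m = 1) (β lb : K) (hβ : β ≠ 0) :
    T12 q β lb m * T21 β m = q • (T21 β m * T12 q β lb m) := by
  rw [T12_mul_T21_eq_weightedShift q hq β lb hβ, T21_mul_T12_eq_weightedShift q hq β lb hβ,
    smul_weightedShift]
  congr 1
  funext p
  simp only [Pi.smul_apply, smul_eq_mul]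
  ring

theorem T11_mul_T22 (hq : q ^ m = 1) (α β la lb : K) (hα : α ≠ 0) (hβ : β ≠ 0) :
    T11 q α m * T22 q α la lb m =
      T22 q α la lb m * T11 q α m + (q - 1) • (T21 β m * T12 q β lb m) := by
  rw [T11_mul_T22_eq_weightedShift q hq α la lb hα, T22_mul_T11_eq_weightedShift q hq α la lb hα,
    T21_mul_T12_eq_weightedShift q hq β lb hβ, smul_weightedShift, weightedShift_add]
  congr 1
  funext p
  simp only [Pi.smul_apply, Pi.add_apply, smul_eq_mul]
  ring

theorem exists_algHom_T (hq : q ^ m = 1) (α β la lb : K) (hα : α ≠ 0) (hβ : β ≠ 0) :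
    ∃ ρ : DDMat2 q →ₐ[K] (Module.End K ((Fin m × Fin m) → K))ᵐᵒᵖ,
      ρ (Z11 q) = op (T11 q α m) ∧ ρ (Z12 q) = op (T12 q β lb m) ∧
      ρ (Z21 q) = op (T21 β m) ∧ ρ (Z22 q) = op (T22 q α la lb m) := by
  refine DDMat2.exists_algHom q _ _ _ _ ?_ ?_ ?_ ?_ ?_ ?_ <;>
    simp only [← op_mul, ← op_smul, ← op_add, op_inj]
  · exact commute_T11_T12 q hq α β lb
  · exact T11_mul_T21 q hq α β
  · exact commute_T21_T22 q hq α β la lb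
  · exact T12_mul_T22 q hq α β la lb
  · exact T12_mul_T21 q hq β lb hβ
  · exact T11_mul_T22 q hq α β la lb hα hβ

theorem eq_bot_or_eq_top_of_T_invariant (hq : IsPrimitiveRoot q m)
    {α β la lb : K} (hα : α ≠ 0) (hβ : β ≠ 0) (hla : la ≠ 0) (hlb : lb ≠ 0)
    {W : Submodule K ((Fin m × Fin m) → K)}
    (h11 : ∀ v ∈ W, T11 q α m v ∈ W) (h12 : ∀ v ∈ W, T12 q β lb m v ∈ W)
    (h21 : ∀ v ∈ W, T21 β m v ∈ W) (h22 : ∀ v ∈ W, T22 q α la lb m v ∈ W) :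
    W = ⊥ ∨ W = ⊤ := by
  refine or_iff_not_imp_left.2 fun hW => ?_
  have hq₀ : q ≠ 0 := hq.ne_zero (NeZero.ne m)
  set d₁ : Fin m × Fin m → K := fun p => lb * q * q ^ (p.2 : ℕ) / q ^ (p.1 : ℕ)
  set d₂ : Fin m × Fin m → K := fun p => q ^ (p.2 : ℕ) * (la + lb / q ^ (p.1 : ℕ))
  have hd : ∀ f ∈ ({d₁, d₂} : Set _), ∀ v ∈ W, f * v ∈ W := by
    rintro f (rfl | rfl) v hv
    · rw [← weightedShift_zero_apply, ← T12_mul_T21_eq_weightedShift q hq.pow_eq_one β lb hβ]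
      exact h12 _ (h21 _ hv)
    · rw [← weightedShift_zero_apply, ← T22_mul_T11_eq_weightedShift q hq.pow_eq_one α la lb hα]
      exact h22 _ (h11 _ hv)
  have hsep : ∀ p p', p ≠ p' → ∃ f ∈ ({d₁, d₂} : Set _), f p ≠ f p' := by
    rintro ⟨a, b⟩ ⟨a', b'⟩ hne
    by_contra! h
    exact hne (eq_of_diagonal_weights_eq q hq hla hlb (h d₁ (by simp)) (h d₂ (by simp)))
  obtain ⟨p₀, hp₀⟩ := Submodule.exists_single_mem_of_mul_mem hW hd hsep
  have hall : {p | Pi.single p (1 : K) ∈ W} = Set.univ := by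
    refine Set.eq_univ_of_forall_add_mem (Fin.addSubmonoidClosure_prod_eq_top m) ⟨p₀, hp₀⟩ ?_
    rintro p hp t (rfl | rfl)
    · rw [T11_eq_weightedShift] at h11
      simpa [sub_eq_add_neg] using
        Submodule.single_mem_of_weightedShift_mem h11 (by split_ifs <;> simp [hα, hq₀]) hp
    · rw [T21_eq_weightedShift] at h21
      simpa [sub_eq_add_neg] using
        Submodule.single_mem_of_weightedShift_mem h21 (by split_ifs <;> simp [hβ]) hp
  rw [eq_top_iff, ← (Pi.basisFun K _).span_eq, Submodule.span_le]
  rintro _ ⟨p, rfl⟩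
  simpa using Set.eq_univ_iff_forall.1 hall p

end N1

theorem DDMat2_module_N1_welldefined_simple_dim
    (m : ℕ) [NeZero m] (hq1 : q ^ m = 1) (hq2 : ∀ k : ℕ, 1 ≤ k → k < m → q ^ k ≠ 1)
    (α β la lb : K) (hα : α ≠ 0) (hβ : β ≠ 0) (hla : la ≠ 0) (hlb : lb ≠ 0) :
    (∃ ρ : DDMat2 q →ₐ[K] (Module.End K ((Fin m × Fin m) → K))ᵐᵒᵖ,
        ρ (Z11 q) = op (T11 q α m) ∧ ρ (Z12 q) = op (T12 q β lb m) ∧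
        ρ (Z21 q) = op (T21 β m) ∧ ρ (Z22 q) = op (T22 q α la lb m)) ∧
    (∀ W : Submodule K ((Fin m × Fin m) → K),
        (∀ v ∈ W, T11 q α m v ∈ W) → (∀ v ∈ W, T12 q β lb m v ∈ W) →
        (∀ v ∈ W, T21 β m v ∈ W) → (∀ v ∈ W, T22 q α la lb m v ∈ W) →
        W = ⊥ ∨ W = ⊤) ∧
    Module.finrank K ((Fin m × Fin m) → K) = m ^ 2 := by
  have hq : IsPrimitiveRoot q m := .mk_of_lt q (NeZero.pos m) hq1 fun k hk => hq2 k hk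
  refine ⟨exists_algHom_T q hq1 α β la lb hα hβ,
    fun W => eq_bot_or_eq_top_of_T_invariant q hq hα hβ hla hlb, ?_⟩
  rw [Module.finrank_fintype_fun_eq_card, Fintype.card_prod, Fintype.card_fin, sq]
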